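/- Let G be a finite triangle-free simple graph, λ > 0, and let 𝐈 be a random independent set drawn from the hard-core model on G at fugacity λ. Fix v ∈ V(G) and let 𝐙 denote the number of uncovered neighbours of v with respect to 𝐈. Then 𝔼|N(v) ∩ 𝐈| = (λ/(1+λ))·𝔼𝐙. -/

import Mathlib

/-- A finite set of vertices is independent in `G`. -/
def IndepFinset {V : Type*} (G : SimpleGraph V) (s : Finset V) : Prop :=
  ∀ u ∈ s, ∀ v ∈ s, ¬ G.Adj u v

instance {V : Type*} (G : SimpleGraph V) [DecidableRel G.Adj] (s : Finset V) :
    Decidable (IndepFinset G s) :=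
  inferInstanceAs (Decidable (∀ u ∈ s, ∀ v ∈ s, ¬ G.Adj u v))

/-- The probability that the hard-core model on `G` at fugacity `lam` produces the set
`I`: it is `lam^|I| / Z_G(lam)` if `I` is independent, and `0` otherwise. -/
noncomputable def hcProb {V : Type*} [Fintype V] (G : SimpleGraph V) [DecidableRel G.Adj]
    (lam : ℝ) (I : Finset V) : ℝ :=
  (if IndepFinset G I then lam ^ I.card else 0) /
    ∑ J : Finset V, if IndepFinset G J then lam ^ J.card else 0

/-!
Occupation of a vertex `u` and the event that `u` is uncovered are linked by the bijection
`J ↦ insert u J` between independent sets avoiding `u` with `u` uncovered and independent sets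
containing `u`; it multiplies the weight by `λ`. Since an occupied vertex is uncovered,
`P(u ∈ 𝐈) = λ · P(u ∉ 𝐈, u uncovered)` and `P(u uncovered) = (1 + λ) · P(u ∉ 𝐈, u uncovered)`.
Summing `P(u ∈ 𝐈) = λ/(1+λ) · P(u uncovered)` over the neighbours `u` of `v` gives the theorem.
-/

open Finset

namespace IndepFinset

variable {V : Type*} {G : SimpleGraph V} {I J : Finset V} {u : V}

theorem erase [DecidableEq V] (hI : IndepFinset G I) (u : V) : IndepFinset G (I.erase u) :=
  fun a ha b hb => hI a (mem_of_mem_erase ha) b (mem_of_mem_erase hb)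

variable [DecidableEq V] [Fintype (G.neighborSet u)]

theorem neighborFinset_inter_eq_empty (hI : IndepFinset G I) (hu : u ∈ I) :
    G.neighborFinset u ∩ I = ∅ := by
  ext w
  simp only [mem_inter, SimpleGraph.mem_neighborFinset, notMem_empty, iff_false, not_and]
  exact fun hadj hw => hI u hu w hw hadj

theorem insert (hJ : IndepFinset G J) (hu : G.neighborFinset u ∩ J = ∅) :
    IndepFinset G (insert u J) := by
  have hnot : ∀ w ∈ J, ¬ G.Adj u w := fun w hw hadj =>
    (eq_empty_iff_forall_notMem.1 hu w) (mem_inter.2 ⟨(G.mem_neighborFinset u w).2 hadj, hw⟩)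
  intro a ha b hb hab
  rcases mem_insert.1 ha with rfl | ha <;> rcases mem_insert.1 hb with hb | hb
  · exact G.loopless.irrefl a (hb ▸ hab)
  · exact hnot b hb hab
  · exact hnot a ha (hb ▸ hab).symm
  · exact hJ a ha b hb hab

end IndepFinset

section Weight

variable {V : Type*} (G : SimpleGraph V) [DecidableRel G.Adj] (lam : ℝ)

noncomputable def hcWeight (I : Finset V) : ℝ :=
  if IndepFinset G I then lam ^ #I else 0

theorem hcProb_eq_hcWeight_div [Fintype V] (I : Finset V) :
    hcProb G lam I = hcWeight G lam I / ∑ J, hcWeight G lam J :=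
  rfl

variable [Fintype V] [DecidableEq V] {G lam}

theorem hcWeight_insert {u : V} {J : Finset V} (hu : u ∉ J) (hJ : G.neighborFinset u ∩ J = ∅) :
    hcWeight G lam (insert u J) = lam * hcWeight G lam J := by
  by_cases hind : IndepFinset G J
  · simp only [hcWeight, hind, hind.insert hJ, if_true, card_insert_of_notMem hu, pow_succ']
  · have : ¬ IndepFinset G (insert u J) := fun h =>
      hind (by simpa [erase_insert hu] using h.erase u)
    simp only [hcWeight, hind, this, if_false, mul_zero]

theorem hcWeight_eq_zero_of_mem_of_covered {u : V} {I : Finset V} (hu : u ∈ I)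
    (hcov : G.neighborFinset u ∩ I ≠ ∅) : hcWeight G lam I = 0 :=
  if_neg fun hI => hcov (hI.neighborFinset_inter_eq_empty hu)

variable (G lam)

theorem sum_hcWeight_mem_eq_sum_mem_uncovered (u : V) :
    ∑ I with u ∈ I, hcWeight G lam I =
      ∑ I with u ∈ I ∧ G.neighborFinset u ∩ I = ∅, hcWeight G lam I := by
  rw [← filter_filter]
  refine (sum_filter_of_ne fun I hI hne => ?_).symm
  by_contra hcov
  exact hne (hcWeight_eq_zero_of_mem_of_covered (mem_filter.1 hI).2 hcov)

theorem sum_hcWeight_mem_uncovered_eq_mul (u : V) :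
    ∑ I with u ∈ I ∧ G.neighborFinset u ∩ I = ∅, hcWeight G lam I =
      lam * ∑ J with u ∉ J ∧ G.neighborFinset u ∩ J = ∅, hcWeight G lam J := by
  have herase : ∀ I : Finset V, G.neighborFinset u ∩ I = ∅ → G.neighborFinset u ∩ I.erase u = ∅ :=
    fun I hI => subset_empty.1 (hI ▸ inter_subset_inter_left (erase_subset u I))
  rw [mul_sum]
  refine sum_nbij' (·.erase u) (insert u) ?_ ?_ ?_ ?_ ?_
  · intro I hI
    simp only [mem_filter, mem_univ, true_and] at hI ⊢
    exact ⟨notMem_erase u I, herase I hI.2⟩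
  · intro J hJ
    simp only [mem_filter, mem_univ, true_and] at hJ ⊢
    refine ⟨mem_insert_self u J, ?_⟩
    rw [inter_insert_of_notMem (G.notMem_neighborFinset_self u), hJ.2]
  · intro I hI
    exact insert_erase (mem_filter.1 hI).2.1
  · intro J hJ
    exact erase_insert (mem_filter.1 hJ).2.1
  · intro I hI
    obtain ⟨hu, hunc⟩ := (mem_filter.1 hI).2
    rw [← hcWeight_insert (notMem_erase u I) (herase I hunc), insert_erase hu]

theorem sum_hcWeight_mem_eq (hlam : 1 + lam ≠ 0) (u : V) :
    ∑ I with u ∈ I, hcWeight G lam I =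
      lam / (1 + lam) * ∑ I with G.neighborFinset u ∩ I = ∅, hcWeight G lam I := by
  have hsplit : ∑ I with G.neighborFinset u ∩ I = ∅, hcWeight G lam I =
      ∑ I with u ∈ I ∧ G.neighborFinset u ∩ I = ∅, hcWeight G lam I +
        ∑ J with u ∉ J ∧ G.neighborFinset u ∩ J = ∅, hcWeight G lam J := by
    rw [← sum_filter_add_sum_filter_not _ (u ∈ ·), filter_filter, filter_filter]
    simp only [and_comm]
  rw [hsplit, sum_hcWeight_mem_eq_sum_mem_uncovered, sum_hcWeight_mem_uncovered_eq_mul]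
  field_simp
  ring

end Weight

theorem Finset.sum_mul_card_filter {α β R : Type*} [Fintype α] [NonAssocSemiring R] (f : α → R)
    (s : Finset β)
    (p : β → α → Prop) [∀ u I, Decidable (p u I)] :
    ∑ I, f I * #{u ∈ s | p u I} = ∑ u ∈ s, ∑ I with p u I, f I := by
  simp only [card_filter, Nat.cast_sum, Nat.cast_ite, Nat.cast_one, Nat.cast_zero, mul_sum,
    mul_ite, mul_one, mul_zero, sum_filter]
  exact sum_comm

theorem Finset.sum_mul_card_inter {β R : Type*} [Fintype β] [DecidableEq β] [NonAssocSemiring R]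
    (f : Finset β → R) (s : Finset β) : ∑ I, f I * #(s ∩ I) = ∑ u ∈ s, ∑ I with u ∈ I, f I := by
  simp only [← filter_mem_eq_inter, sum_mul_card_filter]

theorem hard_core_expected_occupied_neighbours_general {V : Type*} [Fintype V] [DecidableEq V]
    (G : SimpleGraph V) [DecidableRel G.Adj]
    (lam : ℝ) (hlam : 0 < lam) (v : V) :
    (∑ I : Finset V, hcProb G lam I * ((G.neighborFinset v ∩ I).card : ℝ)) =
      lam / (1 + lam) *
        ∑ I : Finset V, hcProb G lam I *
          ((((G.neighborFinset v).filter fun u =>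
              G.neighborFinset u ∩ I = ∅).card : ℝ)) := by
  simp only [hcProb_eq_hcWeight_div, div_mul_eq_mul_div, ← sum_div, sum_mul_card_inter,
    sum_mul_card_filter, sum_hcWeight_mem_eq G lam (by positivity), ← mul_sum]
  ring

/-- In the hard-core model on a triangle-free graph at fugacity `lam > 0`, writing `𝐙`
for the number of uncovered neighbours of a fixed vertex `v`, the expected number of
occupied neighbours of `v` satisfies `𝔼|N(v) ∩ 𝐈| = (lam/(1+lam))·𝔼𝐙`. -/
theorem hard_core_expected_occupied_neighbours {V : Type*} [Fintype V] [DecidableEq V]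
    (G : SimpleGraph V) [DecidableRel G.Adj] (hG : G.CliqueFree 3)
    (lam : ℝ) (hlam : 0 < lam) (v : V) :
    (∑ I : Finset V, hcProb G lam I * ((G.neighborFinset v ∩ I).card : ℝ)) =
      lam / (1 + lam) *
        ∑ I : Finset V, hcProb G lam I *
          ((((G.neighborFinset v).filter fun u =>
              G.neighborFinset u ∩ I = ∅).card : ℝ)) :=
  hard_core_expected_occupied_neighbours_general G lam hlam v
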